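/- If the five vertices of a tagged pentatope are affinely independent, then the two children produced by the bisection rule each have affinely independent vertices, their union equals the original pentatope (as convex hulls), and their interiors are disjoint. -/

import Mathlib

/-! Each child arises from the pentatope by replacing one endpoint of the refinement edge
`x₀x₄` by its midpoint. This changes neither the affine span, so in `ℝ⁴` the children are
again simplices, nor, after splitting the edge at the midpoint, the union of the hulls.
The difference `λ₀ - λ₄` of barycentric coordinates is `≥ 0` on one child and `≤ 0` on the
other, so a common interior point would give a nonempty open set on which this nonconstant
affine function vanishes. -/

/-- A tagged pentatope: an ordered 5-tuple of vertices together with a type γ ∈ {0,1,2,3}. -/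
structure TP (V : Type*) where
  v : Fin 5 → V
  γ : Fin 4

/-- The vertex permutation used in Stevenson's reflection, depending on the type. -/
def refPerm (γ : Fin 4) : Fin 5 → Fin 5 :=
  if γ = 0 then ![4, 3, 2, 1, 0]
  else if γ = 1 then ![4, 1, 3, 2, 0]
  else ![4, 1, 2, 3, 0]

/-- The reflection of a tagged pentatope. -/
def TP.reflect {V : Type*} (t : TP V) : TP V := ⟨t.v ∘ refPerm t.γ, t.γ⟩

variable {V : Type*} [AddCommGroup V] [Module ℝ V]

/-- The midpoint x' = (x₀ + x₄)/2 of the refinement edge. -/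
noncomputable def TP.mid (t : TP V) : V := midpoint ℝ (t.v 0) (t.v 4)

/-- First child of the bisection rule. -/
noncomputable def TP.child1 (t : TP V) : TP V :=
  ⟨![t.v 0, t.mid, t.v 1, t.v 2, t.v 3], t.γ + 1⟩

/-- Second child of the bisection rule. -/
noncomputable def TP.child2 (t : TP V) : TP V :=
  ⟨if t.γ = 0 then ![t.v 4, t.mid, t.v 3, t.v 2, t.v 1]
    else if t.γ = 1 then ![t.v 4, t.mid, t.v 1, t.v 3, t.v 2]
    else ![t.v 4, t.mid, t.v 1, t.v 2, t.v 3], t.γ + 1⟩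

open Set

section

variable {k W P : Type*} [Ring k] [AddCommGroup W] [Module k W] [AddTorsor W P]

theorem affineSpan_insert_midpoint [Invertible (2 : k)] (a b : P) (s : Set P) :
    affineSpan k (insert a (insert (midpoint k a b) s)) = affineSpan k (insert a (insert b s)) := by
  set m := midpoint k a b
  have hm : m ∈ affineSpan k (insert a (insert b s)) :=
    affineSpan_mono k (insert_subset_insert (singleton_subset_iff.2 (mem_insert b s)))
      (AffineMap.lineMap_mem_affineSpan_pair _ a b)
  have hb : b ∈ affineSpan k (insert a (insert m s)) := by
    have ha' : a ∈ affineSpan k (insert a (insert m s)) := mem_affineSpan k (mem_insert a _)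
    have hm' : m ∈ affineSpan k (insert a (insert m s)) :=
      mem_affineSpan k (mem_insert_of_mem a (mem_insert m s))
    convert AffineSubspace.vadd_mem_of_mem_direction
      (AffineSubspace.vsub_mem_direction hm' ha') hm'
    exact (Equiv.pointReflection_midpoint_left a b).symm
  rw [← affineSpan_insert_eq_affineSpan k hb, insert_comm b a, insert_comm b m,
    insert_comm a m, affineSpan_insert_eq_affineSpan k hm]

end

section

variable {k W P ι : Type*} [DivisionRing k] [AddCommGroup W] [Module k W] [AddTorsor W P]

theorem affineIndependent_of_affineSpan_eq_top [Fintype ι] {p : ι → P}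
    (hc : Fintype.card ι = Module.finrank k W + 1) (hp : affineSpan k (range p) = ⊤) :
    AffineIndependent k p := by
  rw [affineIndependent_iff_le_finrank_vectorSpan k p hc, ← direction_affineSpan, hp,
    AffineSubspace.direction_top, finrank_top]

end

section

variable {𝕜 E : Type*} [Field 𝕜] [LinearOrder 𝕜] [IsStrictOrderedRing 𝕜] [AddCommGroup E]
  [Module 𝕜 E]

theorem segment_eq_union_of_mem {a b z : E} (hz : z ∈ segment 𝕜 a b) :
    segment 𝕜 a b = segment 𝕜 a z ∪ segment 𝕜 z b := by
  rw [segment_eq_image_lineMap] at hz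
  obtain ⟨t, ⟨ht0, ht1⟩, rfl⟩ := hz
  have h01 : segment 𝕜 (0 : 𝕜) 1 = segment 𝕜 0 t ∪ segment 𝕜 t 1 := by
    rw [segment_eq_Icc ht0, segment_eq_Icc ht1, segment_eq_Icc zero_le_one,
      Icc_union_Icc_eq_Icc ht0 ht1]
  calc segment 𝕜 a b = AffineMap.lineMap a b '' segment 𝕜 (0 : 𝕜) 1 := by
        rw [image_segment]; simp
    _ = _ := by rw [h01, image_union, image_segment, image_segment]; simp

theorem convexHull_insert_insert_eq_union {a b z : E} {s : Set E} (hs : s.Nonempty)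
    (hz : z ∈ segment 𝕜 a b) :
    convexHull 𝕜 (insert a (insert b s)) =
      convexHull 𝕜 (insert a (insert z s)) ∪ convexHull 𝕜 (insert z (insert b s)) := by
  have key : ∀ x y : E, convexHull 𝕜 (insert x (insert y s)) =
      convexJoin 𝕜 (segment 𝕜 x y) (convexHull 𝕜 s) := fun x y => by
    rw [← singleton_union (s := s), ← insert_union, convexHull_union (insert_nonempty _ _) hs,
      convexHull_pair]
  rw [key, key, key, segment_eq_union_of_mem hz, convexJoin_union_left]

end

section

variable {E : Type*} [NormedAddCommGroup E] [NormedSpace ℝ E]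

theorem interior_inter_interior_eq_empty_of_nonneg_of_nonpos {s t : Set E} (f : E →ᵃ[ℝ] ℝ)
    {x : E} (hx : f x ≠ 0) (hs : ∀ p ∈ s, 0 ≤ f p) (ht : ∀ p ∈ t, f p ≤ 0) :
    interior s ∩ interior t = ∅ := by
  rw [← interior_inter, ← not_nonempty_iff_eq_empty]
  intro hne
  have hf : f = AffineMap.const ℝ E 0 :=
    AffineMap.ext_on (isOpen_interior.affineSpan_eq_top hne) fun p hp =>
      have hp := interior_subset hp
      le_antisymm (ht p hp.2) (hs p hp.1)
  exact hx (by rw [hf]; rfl)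

theorem AffineBasis.interior_inter_interior_convexHull_midpoint_eq_empty {ι : Type*}
    (b : AffineBasis ι ℝ E) {i j : ι} (hij : i ≠ j) {K : Set ι} (hi : i ∉ K) (hj : j ∉ K) :
    interior (convexHull ℝ (insert (b i) (insert (midpoint ℝ (b i) (b j)) (b '' K)))) ∩
      interior (convexHull ℝ (insert (b j) (insert (midpoint ℝ (b i) (b j)) (b '' K)))) =
        ∅ := by
  set f := b.coord i - b.coord j
  have hfi : f (b i) = 1 := by simp [f, b.coord_apply_eq, b.coord_apply_ne hij.symm]
  have hfj : f (b j) = -1 := by simp [f, b.coord_apply_eq, b.coord_apply_ne hij]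
  have hfm : f (midpoint ℝ (b i) (b j)) = 0 := by
    rw [AffineMap.map_midpoint, hfi, hfj]; norm_num [midpoint_eq_smul_add]
  have hfK : ∀ l ∈ K, f (b l) = 0 := fun l hl => by
    simp [f, b.coord_apply_ne (ne_of_mem_of_not_mem hl hi).symm,
      b.coord_apply_ne (ne_of_mem_of_not_mem hl hj).symm]
  refine interior_inter_interior_eq_empty_of_nonneg_of_nonpos f (x := b i) (by simp [hfi])
    (fun p hp => convexHull_min ?_ ((convex_Ici 0).affine_preimage f) hp)
    (fun p hp => convexHull_min ?_ ((convex_Iic 0).affine_preimage f) hp)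
  · simpa [subset_def, hfi, hfm] using fun l hl => (hfK l hl).ge
  · simpa [subset_def, hfj, hfm] using fun l hl => (hfK l hl).le

end

theorem TP.range_v {α : Type*} (t : TP α) :
    range t.v = insert (t.v 0) (insert (t.v 4) (t.v '' {1, 2, 3})) := by
  ext; simp [Fin.exists_fin_succ]; tauto

theorem TP.range_child1_v (t : TP V) :
    range t.child1.v = insert (t.v 0) (insert t.mid (t.v '' {1, 2, 3})) := by
  ext; simp [TP.child1]; tauto

theorem TP.range_child2_v (t : TP V) :
    range t.child2.v = insert (t.v 4) (insert t.mid (t.v '' {1, 2, 3})) := by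
  unfold TP.child2
  split_ifs <;> ext <;> simp <;> tauto

theorem bisect_children_partition (t : TP (Fin 4 → ℝ))
    (h : AffineIndependent ℝ t.v) :
    AffineIndependent ℝ t.child1.v ∧
    AffineIndependent ℝ t.child2.v ∧
    convexHull ℝ (Set.range t.child1.v) ∪ convexHull ℝ (Set.range t.child2.v) =
      convexHull ℝ (Set.range t.v) ∧
    interior (convexHull ℝ (Set.range t.child1.v)) ∩
      interior (convexHull ℝ (Set.range t.child2.v)) = ∅ := by
  have hcard : Fintype.card (Fin 5) = Module.finrank ℝ (Fin 4 → ℝ) + 1 := by simp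
  have hspan : affineSpan ℝ (range t.v) = ⊤ :=
    h.affineSpan_eq_top_iff_card_eq_finrank_add_one.2 hcard
  let b : AffineBasis (Fin 5) ℝ (Fin 4 → ℝ) := ⟨t.v, h, hspan⟩
  have hdisj := b.interior_inter_interior_convexHull_midpoint_eq_empty (i := 0) (j := 4)
    (K := {1, 2, 3}) (by decide) (by decide) (by decide)
  have hs : (t.v '' {1, 2, 3}).Nonempty := by simp
  rw [TP.range_v t] at hspan ⊢
  rw [TP.range_child1_v, TP.range_child2_v]
  refine ⟨affineIndependent_of_affineSpan_eq_top hcard ?_,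
    affineIndependent_of_affineSpan_eq_top hcard ?_, ?_, hdisj⟩
  · rw [TP.range_child1_v, TP.mid, affineSpan_insert_midpoint, hspan]
  · rw [TP.range_child2_v, TP.mid, midpoint_comm, affineSpan_insert_midpoint, insert_comm, hspan]
  · rw [insert_comm (t.v 4), convexHull_insert_insert_eq_union (a := t.v 0) (b := t.v 4) hs
      (midpoint_mem_segment _ _)]
    rfl
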